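/- arXiv:1709.03931 — 2 statements merged into one kernel-verified Lean document; each statement's English description precedes it below -/
import Mathlib

section
/- Let β, γ, τ > 0 with τ < γ/β², let N ∈ ℕ, and let I₀, I₁, …, I_N be nonnegative real numbers such that β√I₀ ≤ γ and I_k − I_{k−1} ≤ τ(β√(I_k) − γ) for all k = 1, …, N. Then β√(I_k) ≤ γ for all k = 0, …, N, and I_k ≤ I₀ − kτ(γ − β√I₀) for all k = 0, …, N. In particular, if β√I₀ < γ then N ≤ I₀/(τ(γ − β√I₀)). -/
/-!
Write `x = β√I_{k+1}`. If `x > γ` while `β√I_k ≤ γ`, then `β²(I_{k+1} - I_k) ≥ x² - γ²`, and the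
recursion together with `τβ² < γ` gives `(x - γ)(x + γ) < γ(x - γ)`, i.e. `x < 0`. So the sequence
stays in the region `β√I ≤ γ`, where the recursion makes it decrease. Hence `√I_k ≤ √I_0`, and every
step lowers `I` by at least `τ(γ - β√I_0)`.
-/

open Real

theorem mul_sqrt_le_of_sub_le {β γ τ a b : ℝ} (hβ : 0 ≤ β) (hτβ : τ * β ^ 2 < γ)
    (ha : 0 ≤ a) (hb : 0 ≤ b) (ha_sub : β * √a ≤ γ) (hab : b - a ≤ τ * (β * √b - γ)) :
    β * √b ≤ γ := by
  by_contra! hsup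
  set x := β * √b
  have hx : 0 ≤ x := by positivity
  have hx_sq : x ^ 2 = β ^ 2 * b := by rw [mul_pow, sq_sqrt hb]
  have ha_sq : β ^ 2 * a ≤ γ ^ 2 := by
    rw [← sq_sqrt ha, ← mul_pow]
    exact pow_le_pow_left₀ (by positivity) ha_sub 2
  have hlt : (x - γ) * (x + γ) < (x - γ) * γ := calc
    (x - γ) * (x + γ) = x ^ 2 - γ ^ 2 := by ring
    _ ≤ β ^ 2 * (b - a) := by rw [hx_sq]; linarith
    _ ≤ β ^ 2 * (τ * (x - γ)) := mul_le_mul_of_nonneg_left hab (by positivity)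
    _ = τ * β ^ 2 * (x - γ) := by ring
    _ < γ * (x - γ) := mul_lt_mul_of_pos_right hτβ (sub_pos.mpr hsup)
    _ = (x - γ) * γ := by ring
  linarith [lt_of_mul_lt_mul_left hlt (sub_pos.mpr hsup).le]

theorem le_sub_mul_of_succ_le_sub {N : ℕ} {I : ℕ → ℝ} {δ : ℝ}
    (h : ∀ k < N, I (k + 1) ≤ I k - δ) : ∀ k ≤ N, I k ≤ I 0 - k * δ := by
  intro k hk
  induction k with
  | zero => simp
  | succ k ih =>
    push_cast
    linarith [h k hk, ih (by omega)]

theorem mul_sqrt_le_of_virial_step {β γ τ : ℝ} {N : ℕ} {I : ℕ → ℝ} (hβ : 0 ≤ β)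
    (hτβ : τ * β ^ 2 < γ) (hI : ∀ k ≤ N, 0 ≤ I k) (h0 : β * √(I 0) ≤ γ)
    (hstep : ∀ k < N, I (k + 1) - I k ≤ τ * (β * √(I (k + 1)) - γ)) :
    ∀ k ≤ N, β * √(I k) ≤ γ := by
  intro k hk
  induction k with
  | zero => exact h0
  | succ k ih =>
    exact mul_sqrt_le_of_sub_le hβ hτβ (hI k (by omega)) (hI _ hk) (ih (by omega)) (hstep k hk)

theorem discrete_virial_iteration_general (β γ τ : ℝ) (hβ : 0 < β)
    (hτ : 0 < τ) (hτsmall : τ < γ / β ^ 2) (N : ℕ) (I : ℕ → ℝ)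
    (hInn : ∀ k : ℕ, k ≤ N → 0 ≤ I k)
    (h0 : β * Real.sqrt (I 0) ≤ γ)
    (hrec : ∀ k : ℕ, 1 ≤ k → k ≤ N →
      I k - I (k - 1) ≤ τ * (β * Real.sqrt (I k) - γ)) :
    (∀ k : ℕ, k ≤ N → β * Real.sqrt (I k) ≤ γ) ∧
    (∀ k : ℕ, k ≤ N → I k ≤ I 0 - k * τ * (γ - β * Real.sqrt (I 0))) ∧
    (β * Real.sqrt (I 0) < γ →
      (N : ℝ) ≤ I 0 / (τ * (γ - β * Real.sqrt (I 0)))) := by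
  have hτβ : τ * β ^ 2 < γ := (lt_div_iff₀ (by positivity)).mp hτsmall
  have hstep : ∀ k < N, I (k + 1) - I k ≤ τ * (β * √(I (k + 1)) - γ) := fun k hk => by
    simpa only [Nat.add_sub_cancel] using hrec (k + 1) (by omega) hk
  have hsub := mul_sqrt_le_of_virial_step hβ.le hτβ hInn h0 hstep
  have hle : ∀ k ≤ N, I k ≤ I 0 := by
    simpa using le_sub_mul_of_succ_le_sub (δ := 0) fun k hk => by
      nlinarith [hstep k hk, hsub (k + 1) hk]
  have hdecay : ∀ k ≤ N, I k ≤ I 0 - k * (τ * (γ - β * √(I 0))) :=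
    le_sub_mul_of_succ_le_sub fun k hk => by
      have hsqrt : √(I (k + 1)) ≤ √(I 0) := sqrt_le_sqrt (hle (k + 1) hk)
      nlinarith [hstep k hk, mul_le_mul_of_nonneg_left hsqrt (mul_pos hτ hβ).le]
  refine ⟨hsub, fun k hk => by linarith [hdecay k hk], fun hlt => ?_⟩
  rw [le_div_iff₀ (mul_pos hτ (sub_pos.mpr hlt))]
  linarith [hdecay N le_rfl, hInn N le_rfl]

/-- the discrete virial iteration lemma. If `τ < γ/β²`,
`β√I₀ ≤ γ` and `I_k − I_{k−1} ≤ τ(β√I_k − γ)` for `k = 1, …, N`, then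
`β√I_k ≤ γ` and `I_k ≤ I₀ − kτ(γ − β√I₀)` for all `k ≤ N`; in particular, if
`β√I₀ < γ`, then `N ≤ I₀/(τ(γ − β√I₀))`. -/
theorem discrete_virial_iteration (β γ τ : ℝ) (hβ : 0 < β) (hγ : 0 < γ)
    (hτ : 0 < τ) (hτsmall : τ < γ / β ^ 2) (N : ℕ) (I : ℕ → ℝ)
    (hInn : ∀ k : ℕ, k ≤ N → 0 ≤ I k)
    (h0 : β * Real.sqrt (I 0) ≤ γ)
    (hrec : ∀ k : ℕ, 1 ≤ k → k ≤ N →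
      I k - I (k - 1) ≤ τ * (β * Real.sqrt (I k) - γ)) :
    (∀ k : ℕ, k ≤ N → β * Real.sqrt (I k) ≤ γ) ∧
    (∀ k : ℕ, k ≤ N → I k ≤ I 0 - k * τ * (γ - β * Real.sqrt (I 0))) ∧
    (β * Real.sqrt (I 0) < γ →
      (N : ℝ) ≤ I 0 / (τ * (γ - β * Real.sqrt (I 0)))) :=
  discrete_virial_iteration_general β γ τ hβ hτ hτsmall N I hInn h0 hrec
end

section
/- For α ≥ 0 and r > 0 set g_α(r) = ∫₀^∞ exp(−s − α r²/(4s)) ds. Then 0 ≤ 1 − g_α(r) ≤ 1 for all α ≥ 0 and r > 0, and there exists a finite constant K > 0, independent of α, such that for every α > 0 and every r > 0 with √α · r < 1 one has 1 − g_α(r) ≤ K √α r. Consequently, 1 − g_α(r) ≤ max{1, K} √α r for all α > 0 and r > 0. -/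
/-!
Writing `c = α r² / 4`, we have `1 − g_α(r) = ∫₀^∞ e^{−s} (1 − e^{−c/s}) ds`. The elementary bound
`1 − e^{−x} ≤ min(x, 1) ≤ √x` makes this at most `√c ∫₀^∞ e^{−s} s^{−1/2} ds = √c Γ(1/2) = √(π c)`,
and `√(π c) = (√π / 2) √α r ≤ √α r`; so `K = 1` works.
-/

open MeasureTheory Real Set

noncomputable section

/-- `g_α(r) = ∫₀^∞ exp(−s − α r²/(4s)) ds`. -/
def gfun (α r : ℝ) : ℝ := ∫ s in Set.Ioi (0:ℝ), Real.exp (-s - α * r ^ 2 / (4 * s))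

lemma one_sub_exp_neg_le_sqrt {x : ℝ} (hx : 0 ≤ x) : 1 - exp (-x) ≤ √x := by
  rcases le_total x 1 with hx1 | hx1
  · calc 1 - exp (-x) ≤ x := by linarith [add_one_le_exp (-x)]
      _ ≤ √x := le_sqrt_of_sq_le (by nlinarith)
  · calc 1 - exp (-x) ≤ 1 := by linarith [exp_pos (-x)]
      _ ≤ √x := le_sqrt_of_sq_le (by nlinarith)

lemma integrableOn_exp_neg_sub_div {c : ℝ} (hc : 0 ≤ c) :
    IntegrableOn (fun s => exp (-s - c / s)) (Ioi 0) := by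
  refine (integrableOn_exp_neg_Ioi 0).mono' (by fun_prop) ?_
  filter_upwards [ae_restrict_mem measurableSet_Ioi] with s (hs : 0 < s)
  rw [norm_of_nonneg (exp_pos _).le, exp_le_exp]
  linarith [div_nonneg hc hs.le]

lemma integral_exp_neg_sub_div_le_one {c : ℝ} (hc : 0 ≤ c) :
    ∫ s in Ioi 0, exp (-s - c / s) ≤ 1 := by
  rw [← integral_exp_neg_Ioi_zero]
  refine setIntegral_mono_on (integrableOn_exp_neg_sub_div hc)
    (integrableOn_exp_neg_Ioi 0) measurableSet_Ioi fun s (hs : 0 < s) => ?_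
  rw [exp_le_exp]
  linarith [div_nonneg hc hs.le]

lemma integral_exp_neg_mul_rpow_neg_half :
    ∫ s in Ioi 0, exp (-s) * s ^ (-1 / 2 : ℝ) = √π := by
  rw [← Gamma_one_half_eq, Gamma_eq_integral (by norm_num)]
  norm_num

lemma exp_neg_sub_exp_neg_sub_div_le {c s : ℝ} (hc : 0 ≤ c) (hs : 0 < s) :
    exp (-s) - exp (-s - c / s) ≤ √c * (exp (-s) * s ^ (-1 / 2 : ℝ)) := by
  have hsqrt : √(c / s) = √c * s ^ (-1 / 2 : ℝ) := by
    rw [sqrt_div hc, show (-1 / 2 : ℝ) = -(1 / 2) by norm_num, rpow_neg hs.le, ← sqrt_eq_rpow,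
      div_eq_mul_inv]
  calc exp (-s) - exp (-s - c / s) = exp (-s) * (1 - exp (-(c / s))) := by
        rw [sub_eq_add_neg (-s), exp_add]; ring
    _ ≤ exp (-s) * √(c / s) :=
        mul_le_mul_of_nonneg_left (one_sub_exp_neg_le_sqrt (div_nonneg hc hs.le)) (exp_pos _).le
    _ = √c * (exp (-s) * s ^ (-1 / 2 : ℝ)) := by rw [hsqrt]; ring

lemma one_sub_integral_exp_neg_sub_div_le {c : ℝ} (hc : 0 ≤ c) :
    1 - ∫ s in Ioi 0, exp (-s - c / s) ≤ √c * √π := by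
  have hexp := integrableOn_exp_neg_Ioi 0
  have hGamma : IntegrableOn (fun s : ℝ => exp (-s) * s ^ (-1 / 2 : ℝ)) (Ioi 0) := by
    convert GammaIntegral_convergent (s := 1 / 2) (by norm_num) using 4
    norm_num
  calc 1 - ∫ s in Ioi 0, exp (-s - c / s)
      = ∫ s in Ioi 0, (exp (-s) - exp (-s - c / s)) := by
        rw [integral_sub hexp (integrableOn_exp_neg_sub_div hc), integral_exp_neg_Ioi_zero]
    _ ≤ ∫ s in Ioi 0, √c * (exp (-s) * s ^ (-1 / 2 : ℝ)) :=
        setIntegral_mono_on (hexp.sub (integrableOn_exp_neg_sub_div hc)) (hGamma.const_mul _)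
          measurableSet_Ioi fun s hs => exp_neg_sub_exp_neg_sub_div_le hc hs
    _ = √c * √π := by rw [integral_const_mul, integral_exp_neg_mul_rpow_neg_half]

lemma gfun_eq_integral_exp_neg_sub_div (α r : ℝ) :
    gfun α r = ∫ s in Ioi 0, exp (-s - α * r ^ 2 / 4 / s) := by
  simp only [gfun, div_div]

lemma gfun_nonneg (α r : ℝ) : 0 ≤ gfun α r :=
  setIntegral_nonneg measurableSet_Ioi fun _ _ => (exp_pos _).le

lemma gfun_le_one {α : ℝ} (hα : 0 ≤ α) (r : ℝ) : gfun α r ≤ 1 := by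
  rw [gfun_eq_integral_exp_neg_sub_div]
  exact integral_exp_neg_sub_div_le_one (by positivity)

lemma one_sub_gfun_le_sqrt_mul {α r : ℝ} (hα : 0 ≤ α) (hr : 0 ≤ r) :
    1 - gfun α r ≤ √α * r := by
  have hsqrt : √(α * r ^ 2 / 4) = √α * r / 2 := by
    rw [show α * r ^ 2 / 4 = (√α * r / 2) ^ 2 by rw [div_pow, mul_pow, sq_sqrt hα]; ring,
      sqrt_sq (by positivity)]
  have hpi : √π ≤ 2 := (sqrt_le_left zero_le_two).2 (by linarith [pi_le_four])
  calc 1 - gfun α r ≤ √(α * r ^ 2 / 4) * √π := by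
        rw [gfun_eq_integral_exp_neg_sub_div]
        exact one_sub_integral_exp_neg_sub_div_le (by positivity)
    _ ≤ √α * r / 2 * 2 := by rw [hsqrt]; gcongr
    _ = √α * r := by ring

/-- bounds for `1 − g_α(r)`: it lies in `[0,1]`, and there is a
finite constant `K > 0`, independent of `α`, with `1 − g_α(r) ≤ K√α r` whenever
`√α r < 1`; consequently `1 − g_α(r) ≤ max{1, K}√α r` for all `α, r > 0`. -/
theorem one_sub_gfun_bounds :
    (∀ α r : ℝ, 0 ≤ α → 0 < r → 0 ≤ 1 - gfun α r ∧ 1 - gfun α r ≤ 1) ∧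
    ∃ K : ℝ, 0 < K ∧
      (∀ α r : ℝ, 0 < α → 0 < r → Real.sqrt α * r < 1 →
        1 - gfun α r ≤ K * (Real.sqrt α * r)) ∧
      (∀ α r : ℝ, 0 < α → 0 < r →
        1 - gfun α r ≤ max 1 K * (Real.sqrt α * r)) := by
  refine ⟨fun α r hα _ => ⟨sub_nonneg.2 (gfun_le_one hα r), by linarith [gfun_nonneg α r]⟩,
    1, one_pos, fun α r hα hr _ => ?_, fun α r hα hr => ?_⟩ <;>
  simpa using one_sub_gfun_le_sqrt_mul hα.le hr.le
end
end
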